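/- Let n ≥ 1, let A = (a_{i,j}) be a real n×n matrix, and let f be the piecewise constant function with matrix A on the uniform n×n grid. Then the infimum over all copula measures μ of ∫_{[0,1)²} f dμ equals (1/n) · min over all permutations π of {1,…,n} of ∑_{i=1}^n a_{i,π(i)}, and this infimum is attained by the shuffle-of-M copula measure associated with a minimizing permutation. -/

import Mathlib

open MeasureTheory Set

/-- A copula measure: a probability measure on the plane whose marginals are
Lebesgue measure restricted to `[0,1)`. -/
def IsCopulaMeasure (μ : Measure (ℝ × ℝ)) : Prop :=
  IsProbabilityMeasure μ ∧
  μ.map Prod.fst = volume.restrict (Ico (0:ℝ) 1) ∧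
  μ.map Prod.snd = volume.restrict (Ico (0:ℝ) 1)

/-- The half-open grid cell `[(i)/m, (i+1)/m) × [(j)/m, (j+1)/m)` (0-indexed). -/
def gridCell (m : ℕ) (i j : Fin m) : Set (ℝ × ℝ) :=
  Ico (((i : ℕ) : ℝ) / m) ((((i : ℕ) : ℝ) + 1) / m) ×ˢ
    Ico (((j : ℕ) : ℝ) / m) ((((j : ℕ) : ℝ) + 1) / m)

/-- The closure of the grid cell. -/
def closedCell (m : ℕ) (i j : Fin m) : Set (ℝ × ℝ) :=
  Icc (((i : ℕ) : ℝ) / m) ((((i : ℕ) : ℝ) + 1) / m) ×ˢ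
    Icc (((j : ℕ) : ℝ) / m) ((((j : ℕ) : ℝ) + 1) / m)

/-!
For a copula `μ`, the matrix `M i j = n * μ(cell i j)` is doubly stochastic: its row and column
sums are the marginal masses `1/n` of the vertical and horizontal strips. Since `f` is constant on
cells, `∫ f dμ = (1/n) ∑ a i j * M i j`. By Birkhoff's theorem `M` lies in the convex hull of the
permutation matrices, so this linear functional of `M` is at least its minimum over permutation
matrices, `min_π ∑ a i (π i)`. The shuffle-of-M copula for `π` puts mass `1/n` on each cell
`(i, π i)` and none elsewhere, so it attains the bound at a minimising `π`.
-/

open Function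

theorem ciInf_sum_perm_le_of_mem_doublyStochastic {ι : Type*} [Fintype ι] [DecidableEq ι]
    (a : Matrix ι ι ℝ) {M : Matrix ι ι ℝ} (hM : M ∈ doublyStochastic ℝ ι) :
    ⨅ σ : Equiv.Perm ι, ∑ i, a i (σ i) ≤ ∑ i, ∑ j, a i j * M i j := by
  let L : Matrix ι ι ℝ →ₗ[ℝ] ℝ :=
    { toFun := fun M => ∑ i, ∑ j, a i j * M i j
      map_add' := fun M N => by
        simp only [Matrix.add_apply, mul_add, Finset.sum_add_distrib]
      map_smul' := fun c M => by
        simp only [Matrix.smul_apply, smul_eq_mul, RingHom.id_apply, Finset.mul_sum,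
          mul_left_comm] }
  rw [← SetLike.mem_coe, doublyStochastic_eq_convexHull_permMatrix] at hM
  obtain ⟨_, ⟨σ, rfl⟩, hσ⟩ :=
    (L.concaveOn convex_univ).exists_le_of_mem_convexHull (subset_univ _) hM
  refine (ciInf_le (Set.finite_range _).bddBelow σ).trans (le_of_eq_of_le ?_ hσ)
  simp [L, Equiv.Perm.permMatrix, PEquiv.toMatrix_apply, Equiv.toPEquiv_apply]

def gridPiece (n : ℕ) (i : Fin n) : Set ℝ :=
  Ico (((i : ℕ) : ℝ) / n) ((((i : ℕ) : ℝ) + 1) / n)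

theorem gridCell_eq_prod (n : ℕ) (i j : Fin n) :
    gridCell n i j = gridPiece n i ×ˢ gridPiece n j := rfl

section GridPiece

variable {n : ℕ}

theorem measurableSet_gridPiece (i : Fin n) : MeasurableSet (gridPiece n i) :=
  measurableSet_Ico

theorem measurableSet_gridCell (i j : Fin n) : MeasurableSet (gridCell n i j) :=
  measurableSet_Ico.prod measurableSet_Ico

theorem volume_real_gridPiece (i : Fin n) : volume.real (gridPiece n i) = 1 / n := by
  rw [gridPiece, Real.volume_real_Ico_of_le (by gcongr; linarith)]
  ring

theorem gridPiece_subset_Ico (i : Fin n) : gridPiece n i ⊆ Ico 0 1 := by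
  have hn : (0 : ℝ) < n := by exact_mod_cast i.pos
  have hi : ((i : ℕ) : ℝ) + 1 ≤ n := by exact_mod_cast i.isLt
  refine Ico_subset_Ico (by positivity) ?_
  rwa [div_le_one hn]

theorem pairwise_disjoint_gridPiece : Pairwise (Disjoint on gridPiece n) := by
  intro i j hij
  wlog h : i < j generalizing i j
  · exact (this hij.symm (hij.lt_or_gt.resolve_left h)).symm
  have hn : (0 : ℝ) < n := by exact_mod_cast i.pos
  have hij : ((i : ℕ) : ℝ) + 1 ≤ (j : ℕ) := by exact_mod_cast h
  exact Ico_disjoint_Ico_same.mono_right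
    (Ico_subset_Ico (div_le_div_of_nonneg_right hij hn.le) le_rfl)

theorem iUnion_gridPiece (hn : 1 ≤ n) : ⋃ i, gridPiece n i = Ico 0 1 := by
  refine (iUnion_subset gridPiece_subset_Ico).antisymm fun x hx => mem_iUnion.2 ?_
  have hn0 : (0 : ℝ) < n := by exact_mod_cast hn
  have hxn : 0 ≤ x * n := mul_nonneg hx.1 hn0.le
  have hk : ⌊x * n⌋₊ < n := (Nat.floor_lt hxn).2 (by nlinarith [hx.2])
  refine ⟨⟨⌊x * n⌋₊, hk⟩, (div_le_iff₀ hn0).2 (Nat.floor_le hxn), ?_⟩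
  exact (lt_div_iff₀ hn0).2 (Nat.lt_floor_add_one _)

theorem iUnion_gridCell (hn : 1 ≤ n) :
    ⋃ ij : Fin n × Fin n, gridCell n ij.1 ij.2 = Ico 0 1 ×ˢ Ico 0 1 := by
  simp_rw [gridCell_eq_prod, ← iUnion_gridPiece hn, iUnion_prod]

theorem pairwise_disjoint_gridCell :
    Pairwise (Disjoint on fun ij : Fin n × Fin n => gridCell n ij.1 ij.2) := by
  rintro ⟨i, j⟩ ⟨i', j'⟩ h
  simp only [onFun, gridCell_eq_prod, disjoint_prod]
  by_cases hi : i = i'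
  · exact Or.inr (pairwise_disjoint_gridPiece fun hj => h (by rw [hi, hj]))
  · exact Or.inl (pairwise_disjoint_gridPiece hi)

end GridPiece

namespace IsCopulaMeasure

variable {μ : Measure (ℝ × ℝ)}

theorem map_swap (hμ : IsCopulaMeasure μ) : IsCopulaMeasure (μ.map Prod.swap) := by
  obtain ⟨hprob, hfst, hsnd⟩ := hμ
  refine ⟨Measure.isProbabilityMeasure_map measurable_swap.aemeasurable, ?_, ?_⟩
  · rwa [Measure.map_map measurable_fst measurable_swap]
  · rwa [Measure.map_map measurable_snd measurable_swap]

theorem ae_mem_Ico_prod (hμ : IsCopulaMeasure μ) :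
    ∀ᵐ p ∂μ, p ∈ Ico (0 : ℝ) 1 ×ˢ Ico (0 : ℝ) 1 := by
  have hIco : ∀ᵐ x ∂volume.restrict (Ico (0 : ℝ) 1), x ∈ Ico 0 1 :=
    ae_restrict_mem measurableSet_Ico
  have h1 := ae_of_ae_map measurable_fst.aemeasurable (hμ.2.1 ▸ hIco)
  have h2 := ae_of_ae_map measurable_snd.aemeasurable (hμ.2.2 ▸ hIco)
  filter_upwards [h1, h2] with p using And.intro

variable {n : ℕ}

theorem sum_measureReal_gridCell_row (hn : 1 ≤ n) (hμ : IsCopulaMeasure μ) (i : Fin n) :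
    ∑ j, μ.real (gridCell n i j) = 1 / n := by
  have := hμ.1
  have hstrip : gridPiece n i ×ˢ Ico 0 1 =ᵐ[μ] gridPiece n i ×ˢ (univ : Set ℝ) := by
    filter_upwards [hμ.ae_mem_Ico_prod] with p hp
    exact propext (and_congr_right fun _ => iff_of_true hp.2 (mem_univ _))
  rw [← measureReal_iUnion_fintype (f := gridCell n i)
      (fun j j' h => disjoint_prod.2 (Or.inr (pairwise_disjoint_gridPiece h)))
      fun j => measurableSet_gridCell i j,
    iUnion_congr fun j => gridCell_eq_prod n i j, ← prod_iUnion, iUnion_gridPiece hn,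
    measureReal_congr hstrip, prod_univ,
    ← map_measureReal_apply measurable_fst (measurableSet_gridPiece i), hμ.2.1,
    measureReal_restrict_apply (measurableSet_gridPiece i),
    inter_eq_left.2 (gridPiece_subset_Ico i), volume_real_gridPiece]

theorem sum_measureReal_gridCell_col (hn : 1 ≤ n) (hμ : IsCopulaMeasure μ) (j : Fin n) :
    ∑ i, μ.real (gridCell n i j) = 1 / n := by
  have hswap : ∀ i, μ.real (gridCell n i j) = (μ.map Prod.swap).real (gridCell n j i) := by
    intro i
    rw [map_measureReal_apply measurable_swap (measurableSet_gridCell j i), gridCell_eq_prod,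
      gridCell_eq_prod, preimage_swap_prod]
  simp_rw [hswap, hμ.map_swap.sum_measureReal_gridCell_row hn j]

end IsCopulaMeasure

section PiecewiseConstant

variable {n : ℕ} {a : Fin n → Fin n → ℝ} {f : ℝ × ℝ → ℝ}

theorem integral_eq_sum_gridCell (hn : 1 ≤ n)
    (hf : ∀ i j : Fin n, ∀ p ∈ gridCell n i j, f p = a i j)
    {μ : Measure (ℝ × ℝ)} [IsFiniteMeasure μ]
    (hμ : ∀ᵐ p ∂μ, p ∈ Ico (0 : ℝ) 1 ×ˢ Ico (0 : ℝ) 1) :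
    ∫ p, f p ∂μ = ∑ i, ∑ j, μ.real (gridCell n i j) * a i j := by
  have hcell : ∀ ij : Fin n × Fin n, ∫ p in gridCell n ij.1 ij.2, f p ∂μ
      = μ.real (gridCell n ij.1 ij.2) * a ij.1 ij.2 := fun ij => by
    rw [setIntegral_congr_fun (measurableSet_gridCell _ _) (hf ij.1 ij.2), setIntegral_const,
      smul_eq_mul]
  calc ∫ p, f p ∂μ = ∫ p in ⋃ ij : Fin n × Fin n, gridCell n ij.1 ij.2, f p ∂μ := by
        rw [Measure.restrict_eq_self_of_ae_mem (iUnion_gridCell hn ▸ hμ)]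
    _ = ∑ ij : Fin n × Fin n, ∫ p in gridCell n ij.1 ij.2, f p ∂μ :=
        integral_iUnion_fintype (fun ij => measurableSet_gridCell ij.1 ij.2)
          pairwise_disjoint_gridCell fun ij => IntegrableOn.congr_fun integrableOn_const
            (fun p hp => (hf ij.1 ij.2 p hp).symm) (measurableSet_gridCell _ _)
    _ = _ := by rw [Fintype.sum_congr _ _ hcell, Fintype.sum_prod_type]

def gridMassMatrix (n : ℕ) (μ : Measure (ℝ × ℝ)) : Matrix (Fin n) (Fin n) ℝ :=
  Matrix.of fun i j => n * μ.real (gridCell n i j)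

theorem IsCopulaMeasure.gridMassMatrix_mem_doublyStochastic (hn : 1 ≤ n)
    {μ : Measure (ℝ × ℝ)} (hμ : IsCopulaMeasure μ) :
    gridMassMatrix n μ ∈ doublyStochastic ℝ (Fin n) := by
  have hn0 : (n : ℝ) ≠ 0 := Nat.cast_ne_zero.2 (by omega)
  refine mem_doublyStochastic_iff_sum.2
    ⟨fun i j => mul_nonneg n.cast_nonneg measureReal_nonneg, fun i => ?_, fun j => ?_⟩
  · simp [gridMassMatrix, ← Finset.mul_sum, hμ.sum_measureReal_gridCell_row hn i, hn0]
  · simp [gridMassMatrix, ← Finset.mul_sum, hμ.sum_measureReal_gridCell_col hn j, hn0]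

theorem IsCopulaMeasure.le_integral (hn : 1 ≤ n)
    (hf : ∀ i j : Fin n, ∀ p ∈ gridCell n i j, f p = a i j)
    {μ : Measure (ℝ × ℝ)} (hμ : IsCopulaMeasure μ) :
    (1 / n : ℝ) * ⨅ π : Equiv.Perm (Fin n), ∑ i, a i (π i) ≤ ∫ p, f p ∂μ := by
  have := hμ.1
  have hn0 : (n : ℝ) ≠ 0 := Nat.cast_ne_zero.2 (by omega)
  have hint : ∫ p, f p ∂μ = 1 / n * ∑ i, ∑ j, a i j * gridMassMatrix n μ i j := by
    rw [integral_eq_sum_gridCell hn hf hμ.ae_mem_Ico_prod, Finset.mul_sum]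
    refine Fintype.sum_congr _ _ fun i => ?_
    rw [Finset.mul_sum]
    refine Fintype.sum_congr _ _ fun j => ?_
    simp only [gridMassMatrix, Matrix.of_apply]
    field_simp
  rw [hint]
  gcongr
  exact ciInf_sum_perm_le_of_mem_doublyStochastic a (hμ.gridMassMatrix_mem_doublyStochastic hn)

end PiecewiseConstant

section Shuffle

variable {n : ℕ}

/-- On `[0,1)` this is the shuffle map `T_π`; off `[0,1)` it is the identity. -/
noncomputable def shuffleMap (n : ℕ) (π : Equiv.Perm (Fin n)) (x : ℝ) : ℝ :=
  x + ∑ i, (gridPiece n i).indicator (fun _ => (((π i : ℕ) : ℝ) - (i : ℕ)) / n) x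

theorem measurable_shuffleMap (π : Equiv.Perm (Fin n)) : Measurable (shuffleMap n π) :=
  measurable_id.add <| Finset.measurable_sum _ fun i _ =>
    measurable_const.indicator (measurableSet_gridPiece i)

theorem shuffleMap_of_mem (π : Equiv.Perm (Fin n)) {i : Fin n} {x : ℝ}
    (hx : x ∈ gridPiece n i) :
    shuffleMap n π x = x + (((π i : ℕ) : ℝ) - (i : ℕ)) / n := by
  rw [shuffleMap, Finset.sum_eq_single_of_mem i (Finset.mem_univ i) fun j _ hji =>
    indicator_of_notMem (pairwise_disjoint_gridPiece hji |>.notMem_of_mem_right hx) _,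
    indicator_of_mem hx]

theorem shuffleMap_mem_gridPiece (π : Equiv.Perm (Fin n)) {i : Fin n} {x : ℝ}
    (hx : x ∈ gridPiece n i) : shuffleMap n π x ∈ gridPiece n (π i) := by
  rw [shuffleMap_of_mem π hx]
  obtain ⟨h1, h2⟩ := hx
  constructor
  · calc ((π i : ℕ) : ℝ) / n = (i : ℕ) / n + (((π i : ℕ) : ℝ) - (i : ℕ)) / n := by ring
      _ ≤ _ := by gcongr
  · calc x + (((π i : ℕ) : ℝ) - (i : ℕ)) / n
        < ((i : ℕ) + 1) / n + (((π i : ℕ) : ℝ) - (i : ℕ)) / n := by gcongr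
      _ = (((π i : ℕ) : ℝ) + 1) / n := by ring

theorem map_shuffleMap_restrict_gridPiece (π : Equiv.Perm (Fin n)) (i : Fin n) :
    (volume.restrict (gridPiece n i)).map (shuffleMap n π)
      = volume.restrict (gridPiece n (π i)) := by
  set c : ℝ := (((π i : ℕ) : ℝ) - (i : ℕ)) / n
  have hpre : (· + c) ⁻¹' gridPiece n (π i) = gridPiece n i := by
    rw [gridPiece, gridPiece, preimage_add_const_Ico]
    congr 1 <;> ring
  rw [Measure.map_congr ((ae_restrict_mem (measurableSet_gridPiece i)).mono
      fun x hx => shuffleMap_of_mem π hx), ← hpre]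
  exact ((measurePreserving_add_right volume c).restrict_preimage
    (measurableSet_gridPiece _)).map_eq

theorem map_shuffleMap_restrict_Ico (hn : 1 ≤ n) (π : Equiv.Perm (Fin n)) :
    (volume.restrict (Ico 0 1)).map (shuffleMap n π) = volume.restrict (Ico 0 1) := by
  rw [← iUnion_gridPiece hn, Measure.restrict_iUnion pairwise_disjoint_gridPiece
      measurableSet_gridPiece, Measure.map_sum (measurable_shuffleMap π).aemeasurable]
  simp_rw [map_shuffleMap_restrict_gridPiece, Measure.sum_fintype]
  exact Equiv.sum_comp π fun j => volume.restrict (gridPiece n j)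

noncomputable def shuffleCopula (n : ℕ) (π : Equiv.Perm (Fin n)) : Measure (ℝ × ℝ) :=
  (volume.restrict (Ico 0 1)).map fun x => (x, shuffleMap n π x)

theorem measurable_prodMk_shuffleMap (π : Equiv.Perm (Fin n)) :
    Measurable fun x => (x, shuffleMap n π x) :=
  measurable_id.prodMk (measurable_shuffleMap π)

theorem isCopulaMeasure_shuffleCopula (hn : 1 ≤ n) (π : Equiv.Perm (Fin n)) :
    IsCopulaMeasure (shuffleCopula n π) := by
  have hg := measurable_prodMk_shuffleMap π
  refine ⟨⟨?_⟩, ?_, ?_⟩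
  · simp [shuffleCopula, Measure.map_apply hg MeasurableSet.univ]
  · exact (Measure.map_map measurable_fst hg).trans Measure.map_id
  · exact (Measure.map_map measurable_snd hg).trans (map_shuffleMap_restrict_Ico hn π)

theorem measureReal_shuffleCopula_gridCell (π : Equiv.Perm (Fin n)) (i j : Fin n) :
    (shuffleCopula n π).real (gridCell n i j) = if π i = j then (1 / n : ℝ) else 0 := by
  have hpre : (fun x => (x, shuffleMap n π x)) ⁻¹' gridCell n i j
      = if π i = j then gridPiece n i else ∅ := by
    rw [gridCell_eq_prod, mk_preimage_prod, preimage_id']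
    split_ifs with h
    · exact inter_eq_left.2 fun x hx => h ▸ shuffleMap_mem_gridPiece π hx
    · exact eq_empty_of_forall_notMem fun x hx =>
        (pairwise_disjoint_gridPiece h).notMem_of_mem_left
          (shuffleMap_mem_gridPiece π hx.1) hx.2
  rw [shuffleCopula, map_measureReal_apply (measurable_prodMk_shuffleMap π)
    (measurableSet_gridCell i j), hpre]
  split_ifs
  · rw [measureReal_restrict_apply (measurableSet_gridPiece i),
      inter_eq_left.2 (gridPiece_subset_Ico i), volume_real_gridPiece]
  · simp

theorem integral_shuffleCopula (hn : 1 ≤ n) {a : Fin n → Fin n → ℝ} {f : ℝ × ℝ → ℝ}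
    (hf : ∀ i j : Fin n, ∀ p ∈ gridCell n i j, f p = a i j) (π : Equiv.Perm (Fin n)) :
    ∫ p, f p ∂(shuffleCopula n π) = 1 / n * ∑ i, a i (π i) := by
  have := (isCopulaMeasure_shuffleCopula hn π).1
  rw [integral_eq_sum_gridCell hn hf (isCopulaMeasure_shuffleCopula hn π).ae_mem_Ico_prod]
  simp [measureReal_shuffleCopula_gridCell, Finset.mul_sum]

end Shuffle

theorem stmt_7 (n : ℕ) (hn : 1 ≤ n) (a : Fin n → Fin n → ℝ) (f : ℝ × ℝ → ℝ)
    (hf : ∀ i j : Fin n, ∀ p ∈ gridCell n i j, f p = a i j) :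
    IsLeast {x : ℝ | ∃ μ : Measure (ℝ × ℝ), IsCopulaMeasure μ ∧ x = ∫ p, f p ∂μ}
      ((1 / n : ℝ) * ⨅ π : Equiv.Perm (Fin n), ∑ i, a i (π i)) ∧
    ∃ (π' : Equiv.Perm (Fin n)) (T : ℝ → ℝ), Measurable T ∧
      (∀ i : Fin n, ∀ x ∈ Ico (((i : ℕ) : ℝ) / n) ((((i : ℕ) : ℝ) + 1) / n),
        T x = x + (((π' i : ℕ) : ℝ) - ((i : ℕ) : ℝ)) / n) ∧
      (∑ i, a i (π' i) = ⨅ π : Equiv.Perm (Fin n), ∑ i, a i (π i)) ∧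
      ∫ p, f p ∂((volume.restrict (Ico (0:ℝ) 1)).map (fun x => (x, T x))) =
        (1 / n : ℝ) * ⨅ π : Equiv.Perm (Fin n), ∑ i, a i (π i) := by
  obtain ⟨π', hπ'⟩ :=
    exists_eq_ciInf_of_finite (f := fun π : Equiv.Perm (Fin n) => ∑ i, a i (π i))
  have hint : ∫ p, f p ∂(shuffleCopula n π')
      = 1 / n * ⨅ π : Equiv.Perm (Fin n), ∑ i, a i (π i) := by
    rw [integral_shuffleCopula hn hf, hπ']
  refine ⟨⟨⟨_, isCopulaMeasure_shuffleCopula hn π', hint.symm⟩, ?_⟩, π', shuffleMap n π',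
    measurable_shuffleMap π', fun i x hx => shuffleMap_of_mem π' hx, hπ', hint⟩
  rintro x ⟨μ, hμ, rfl⟩
  exact hμ.le_integral hn hf
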